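/- arXiv:2512.24964 — 2 statements merged into one kernel-verified Lean document; each statement's English description precedes it below -/
import Mathlib

section
/- In the setting of the previous statement (P_N, R_N, F linear with R_N P_N = I and I − P_N R_N F invertible on X⁺), the finite-dimensional operator I_{X_N} − R_N F P_N : X_N → X_N is invertible. -/
/-- invertibility of the finite-dimensional operator
`I_{X_N} - R F P` under the hypotheses of Proposition 4.1 of the paper. -/
theorem stmt4 {Xp XN : Type*} [NormedAddCommGroup Xp] [NormedSpace ℝ Xp] [CompleteSpace Xp]
    [NormedAddCommGroup XN] [NormedSpace ℝ XN] [FiniteDimensional ℝ XN]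
    (D : Submodule ℝ Xp) (P : XN →ₗ[ℝ] Xp) (hP : ∀ v, P v ∈ D)
    (R : D →ₗ[ℝ] XN) (F : Xp →ₗ[ℝ] Xp) (hF : ∀ z, F z ∈ D)
    (hRP : ∀ v : XN, R ⟨P v, hP v⟩ = v)
    (hinv : Function.Bijective fun z : Xp => z - P (R ⟨F z, hF z⟩)) :
    Function.Bijective fun Z : XN => Z - R ⟨F (P Z), hF (P Z)⟩ := by
  constructor
  · intro Z1 Z2 h
    dsimp only at h
    have hz : (fun z : Xp => z - P (R ⟨F z, hF z⟩)) (P Z1)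
        = (fun z : Xp => z - P (R ⟨F z, hF z⟩)) (P Z2) := by
      dsimp only
      rw [← map_sub, ← map_sub, h]
    have hPZ : P Z1 = P Z2 := hinv.injective hz
    have h1 : (⟨P Z1, hP Z1⟩ : D) = ⟨P Z2, hP Z2⟩ := Subtype.ext hPZ
    calc Z1 = R ⟨P Z1, hP Z1⟩ := (hRP Z1).symm
      _ = R ⟨P Z2, hP Z2⟩ := by rw [h1]
      _ = Z2 := hRP Z2
  · intro w
    obtain ⟨z, hz⟩ := hinv.surjective (P w)
    dsimp only at hz
    set u : XN := w + R ⟨F z, hF z⟩ with hu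
    have hPu : P u = z := by
      have : z = P w + P (R ⟨F z, hF z⟩) := by
        rw [← hz]; abel
      rw [hu, map_add, ← this]
    refine ⟨u, ?_⟩
    have hFu : (⟨F (P u), hF (P u)⟩ : D) = ⟨F z, hF z⟩ := Subtype.ext (by rw [hPu])
    dsimp only
    rw [hFu, hu]
    abel
end

section
/- Let τ > 0, h ≥ τ, X = L¹([-τ,0],ℝ^d), X^± = L¹([-τ,h],ℝ^d), X⁺ = L¹([0,h],ℝ^d). Suppose C : [s, s+h] × [-τ,0] → ℝ^{d×d} satisfies: (i) there is γ > 0 with |C(t,θ)| ≤ γ for all t and almost all θ; (ii) t ↦ C(t,θ) is continuous for almost all θ, uniformly in θ. Define 𝓕ₛ : X^± → X⁺ by (𝓕ₛu)(t) = ∫_{-τ}^0 C(s+t,θ) u(t+θ) dθ. Then for every u ∈ X^±, 𝓕ₛu is a continuous function on [0,h], and ‖𝓕ₛu‖_∞ ≤ γ‖u‖_{L¹}. -/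
open MeasureTheory Filter Topology
open scoped ENNReal

lemma l1_translation_tendsto {d : ℕ} (v : ℝ → (Fin d → ℝ)) (hv : Integrable v volume)
    (t₀ : ℝ) :
    Tendsto (fun t => ∫ θ, ‖v (t + θ) - v (t₀ + θ)‖) (𝓝 t₀) (𝓝 0) := by
  have hm1 : MemLp v 1 volume := memLp_one_iff_integrable.mpr hv
  set V : Lp (Fin d → ℝ) 1 volume := hm1.toLp v with hV
  haveI : Fact ((1:ℝ≥0∞) ≤ 1) := ⟨le_refl _⟩
  set g : ℝ → C(ℝ, ℝ) := fun a => ⟨fun x => a + x, by continuity⟩ with hg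
  have hgc : Continuous g := by
    apply ContinuousMap.continuous_of_continuous_uncurry
    exact continuous_fst.add continuous_snd
  have hgm : ∀ a : ℝ, MeasurePreserving (g a) volume volume := fun a =>
    measurePreserving_add_left volume a
  have key := Filter.Tendsto.compMeasurePreservingLp
    (tendsto_const_nhds (x := V) (f := 𝓝 t₀)) (hgc.tendsto t₀) hgm (hgm t₀) (by norm_num)
  rw [tendsto_iff_norm_sub_tendsto_zero] at key
  have heq : ∀ a : ℝ,
      ∫ θ, ‖v (a + θ) - v (t₀ + θ)‖ =
        ‖Lp.compMeasurePreserving (g a) (hgm a) V -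
          Lp.compMeasurePreserving (g t₀) (hgm t₀) V‖ := by
    intro a
    rw [L1.norm_eq_integral_norm]
    refine integral_congr_ae ?_
    have h1 : ∀ b : ℝ, (Lp.compMeasurePreserving (g b) (hgm b) V : ℝ → (Fin d → ℝ)) =ᵐ[volume]
        fun θ => v (b + θ) := by
      intro b
      refine (Lp.coeFn_compMeasurePreserving V (hgm b)).trans ?_
      exact (hgm b).quasiMeasurePreserving.ae_eq_comp (hm1.coeFn_toLp)
    filter_upwards [h1 a, h1 t₀, Lp.coeFn_sub (Lp.compMeasurePreserving (g a) (hgm a) V)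
      (Lp.compMeasurePreserving (g t₀) (hgm t₀) V)] with θ e1 e2 e3
    rw [e3, Pi.sub_apply, e1, e2]
  simp only [heq]
  exact key



/-- regularization for renewal equations: with a bounded kernel,
continuous in `t` uniformly in `θ`, the operator `𝓕ₛ` maps `L¹` functions to
continuous functions with `‖𝓕ₛu‖_∞ ≤ γ ‖u‖_{L¹}`. -/
theorem stmt12 (d : ℕ) (τ h s γ : ℝ) (hτ : 0 < τ) (hτh : τ ≤ h) (hγ : 0 < γ)
    (Ck : ℝ → ℝ → ((Fin d → ℝ) →L[ℝ] (Fin d → ℝ)))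
    (hmeas : ∀ t, AEStronglyMeasurable (Ck t) (volume.restrict (Set.Icc (-τ) (0:ℝ))))
    (hbdd : ∀ t ∈ Set.Icc s (s + h),
      ∀ᵐ θ ∂(volume.restrict (Set.Icc (-τ) (0:ℝ))), ‖Ck t θ‖ ≤ γ)
    (hcont : ∀ t ∈ Set.Icc s (s + h), ∀ ε > (0:ℝ), ∃ δ > (0:ℝ),
      ∀ t' ∈ Set.Icc s (s + h), |t' - t| < δ →
        ∀ᵐ θ ∂(volume.restrict (Set.Icc (-τ) (0:ℝ))), ‖Ck t' θ - Ck t θ‖ ≤ ε)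
    (u : ℝ → (Fin d → ℝ))
    (hu : IntegrableOn u (Set.Icc (-τ) h)) :
    ContinuousOn
      (fun t => ∫ θ in Set.Icc (-τ) (0:ℝ),
        Ck (s + t) θ (Set.indicator (Set.Icc (-τ) h) u (t + θ)))
      (Set.Icc 0 h) ∧
    ∀ t ∈ Set.Icc (0:ℝ) h,
      ‖∫ θ in Set.Icc (-τ) (0:ℝ),
        Ck (s + t) θ (Set.indicator (Set.Icc (-τ) h) u (t + θ))‖
        ≤ γ * ∫ σ in Set.Icc (-τ) h, ‖u σ‖ := by
  set v : ℝ → (Fin d → ℝ) := Set.indicator (Set.Icc (-τ) h) u with hvdef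
  have hvi : Integrable v volume := by
    rw [hvdef]
    exact (integrable_indicator_iff measurableSet_Icc).mpr hu
  -- membership translation
  have hst : ∀ t ∈ Set.Icc (0:ℝ) h, s + t ∈ Set.Icc s (s + h) := by
    intro t ht
    exact ⟨by linarith [ht.1], by linarith [ht.2]⟩
  -- a.e. strong measurability of the integrand
  have hint_meas : ∀ t r : ℝ, AEStronglyMeasurable (fun θ => Ck (s + t) θ (v (r + θ)))
      (volume.restrict (Set.Icc (-τ) (0:ℝ))) := by
    intro t r
    exact isBoundedBilinearMap_apply.continuous.comp_aestronglyMeasurable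
      ((hmeas (s + t)).prodMk ((hvi.comp_add_left r).aestronglyMeasurable.restrict))
  -- integrability of the integrand
  have hint : ∀ t ∈ Set.Icc (0:ℝ) h, ∀ r : ℝ,
      IntegrableOn (fun θ => Ck (s + t) θ (v (r + θ))) (Set.Icc (-τ) (0:ℝ)) := by
    intro t ht r
    refine Integrable.mono' (((hvi.comp_add_left r).norm.const_mul γ).restrict)
      (hint_meas t r) ?_
    filter_upwards [hbdd (s + t) (hst t ht)] with θ hθ
    calc ‖Ck (s + t) θ (v (r + θ))‖ ≤ ‖Ck (s + t) θ‖ * ‖v (r + θ)‖ :=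
          (Ck (s + t) θ).le_opNorm _
      _ ≤ γ * ‖v (r + θ)‖ := mul_le_mul_of_nonneg_right hθ (norm_nonneg _)
  -- the key estimate
  have est : ∀ t₀ ∈ Set.Icc (0:ℝ) h, ∀ t' ∈ Set.Icc (0:ℝ) h, ∀ ε₁ : ℝ, 0 ≤ ε₁ →
      (∀ᵐ θ ∂(volume.restrict (Set.Icc (-τ) (0:ℝ))),
        ‖Ck (s + t') θ - Ck (s + t₀) θ‖ ≤ ε₁) →
      ‖(∫ θ in Set.Icc (-τ) (0:ℝ), Ck (s + t') θ (v (t' + θ))) -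
        ∫ θ in Set.Icc (-τ) (0:ℝ), Ck (s + t₀) θ (v (t₀ + θ))‖
        ≤ γ * (∫ θ in Set.Icc (-τ) (0:ℝ), ‖v (t' + θ) - v (t₀ + θ)‖) +
          ε₁ * ∫ θ in Set.Icc (-τ) (0:ℝ), ‖v (t₀ + θ)‖ := by
    intro t₀ ht₀ t' ht' ε₁ hε₁ hae
    rw [← integral_sub (hint t' ht' t') (hint t₀ ht₀ t₀)]
    have hI1 : IntegrableOn (fun θ => γ * ‖v (t' + θ) - v (t₀ + θ)‖) (Set.Icc (-τ) (0:ℝ)) :=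
      (((hvi.comp_add_left t').sub (hvi.comp_add_left t₀)).norm.const_mul γ).restrict
    have hI2 : IntegrableOn (fun θ => ε₁ * ‖v (t₀ + θ)‖) (Set.Icc (-τ) (0:ℝ)) :=
      ((hvi.comp_add_left t₀).norm.const_mul ε₁).restrict
    calc ‖∫ θ in Set.Icc (-τ) (0:ℝ),
          (Ck (s + t') θ (v (t' + θ)) - Ck (s + t₀) θ (v (t₀ + θ)))‖
        ≤ ∫ θ in Set.Icc (-τ) (0:ℝ),
            ‖Ck (s + t') θ (v (t' + θ)) - Ck (s + t₀) θ (v (t₀ + θ))‖ :=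
          norm_integral_le_integral_norm _
      _ ≤ ∫ θ in Set.Icc (-τ) (0:ℝ),
            (γ * ‖v (t' + θ) - v (t₀ + θ)‖ + ε₁ * ‖v (t₀ + θ)‖) := by
          refine integral_mono_of_nonneg (.of_forall fun θ => norm_nonneg _)
            (hI1.add hI2) ?_
          filter_upwards [hbdd (s + t') (hst t' ht'), hae] with θ h1 h2
          have hsplit : Ck (s + t') θ (v (t' + θ)) - Ck (s + t₀) θ (v (t₀ + θ)) =
              Ck (s + t') θ (v (t' + θ) - v (t₀ + θ)) +
                (Ck (s + t') θ - Ck (s + t₀) θ) (v (t₀ + θ)) := by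
            simp only [map_sub, ContinuousLinearMap.sub_apply]
            abel
          rw [hsplit]
          calc ‖Ck (s + t') θ (v (t' + θ) - v (t₀ + θ)) +
                (Ck (s + t') θ - Ck (s + t₀) θ) (v (t₀ + θ))‖
              ≤ ‖Ck (s + t') θ (v (t' + θ) - v (t₀ + θ))‖ +
                ‖(Ck (s + t') θ - Ck (s + t₀) θ) (v (t₀ + θ))‖ := norm_add_le _ _
            _ ≤ γ * ‖v (t' + θ) - v (t₀ + θ)‖ + ε₁ * ‖v (t₀ + θ)‖ := by
                gcongr
                · exact ((Ck (s + t') θ).le_opNorm _).trans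
                    (mul_le_mul_of_nonneg_right h1 (norm_nonneg _))
                · exact ((Ck (s + t') θ - Ck (s + t₀) θ).le_opNorm _).trans
                    (mul_le_mul_of_nonneg_right h2 (norm_nonneg _))
      _ = γ * (∫ θ in Set.Icc (-τ) (0:ℝ), ‖v (t' + θ) - v (t₀ + θ)‖) +
            ε₁ * ∫ θ in Set.Icc (-τ) (0:ℝ), ‖v (t₀ + θ)‖ := by
          rw [integral_add hI1 hI2, integral_const_mul, integral_const_mul]
  constructor
  · -- continuity
    intro t₀ ht₀
    rw [Metric.continuousWithinAt_iff]
    intro ε hε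
    set M : ℝ := ∫ θ in Set.Icc (-τ) (0:ℝ), ‖v (t₀ + θ)‖ with hM
    have hM0 : 0 ≤ M := integral_nonneg fun θ => norm_nonneg _
    set ε₁ : ℝ := ε / (2 * (M + 1)) with hε₁def
    have hε₁pos : 0 < ε₁ := by positivity
    obtain ⟨δ₁, hδ₁pos, hδ₁⟩ := hcont (s + t₀) (hst t₀ ht₀) ε₁ hε₁pos
    -- translation continuity
    have htr := l1_translation_tendsto v hvi t₀
    have hmem : ∀ᶠ t' in 𝓝 t₀, (∫ θ, ‖v (t' + θ) - v (t₀ + θ)‖) < ε / (2 * γ) := by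
      have := Metric.tendsto_nhds.mp htr (ε / (2 * γ)) (by positivity)
      filter_upwards [this] with t' ht'
      rw [Real.dist_eq] at ht'
      calc (∫ θ, ‖v (t' + θ) - v (t₀ + θ)‖)
          ≤ |(∫ θ, ‖v (t' + θ) - v (t₀ + θ)‖) - 0| := by
            rw [sub_zero]; exact le_abs_self _
        _ < ε / (2 * γ) := ht'
    obtain ⟨δ₂, hδ₂pos, hδ₂⟩ := Metric.eventually_nhds_iff.mp hmem
    refine ⟨min δ₁ δ₂, lt_min hδ₁pos hδ₂pos, ?_⟩
    intro t' ht' hdist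
    rw [Real.dist_eq] at hdist
    have hdist1 : |t' - t₀| < δ₁ := hdist.trans_le (min_le_left _ _)
    have hdist2 : |t' - t₀| < δ₂ := hdist.trans_le (min_le_right _ _)
    have habs : |s + t' - (s + t₀)| < δ₁ := by
      rw [show s + t' - (s + t₀) = t' - t₀ by ring]
      exact hdist1
    have hae := hδ₁ (s + t') (hst t' ht') habs
    have hD : (∫ θ in Set.Icc (-τ) (0:ℝ), ‖v (t' + θ) - v (t₀ + θ)‖) < ε / (2 * γ) := by
      have hfull : (∫ θ, ‖v (t' + θ) - v (t₀ + θ)‖) < ε / (2 * γ) := by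
        apply hδ₂
        rw [Real.dist_eq]; exact hdist2
      refine lt_of_le_of_lt ?_ hfull
      exact setIntegral_le_integral ((hvi.comp_add_left t').sub (hvi.comp_add_left t₀)).norm
        (.of_forall fun θ => norm_nonneg _)
    rw [dist_eq_norm]
    calc ‖(∫ θ in Set.Icc (-τ) (0:ℝ), Ck (s + t') θ (v (t' + θ))) -
          ∫ θ in Set.Icc (-τ) (0:ℝ), Ck (s + t₀) θ (v (t₀ + θ))‖
        ≤ γ * (∫ θ in Set.Icc (-τ) (0:ℝ), ‖v (t' + θ) - v (t₀ + θ)‖) + ε₁ * M :=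
          est t₀ ht₀ t' ht' ε₁ hε₁pos.le hae
      _ < γ * (ε / (2 * γ)) + ε₁ * (M + 1) := by
          have h1 : γ * (∫ θ in Set.Icc (-τ) (0:ℝ), ‖v (t' + θ) - v (t₀ + θ)‖) <
              γ * (ε / (2 * γ)) := by
            apply mul_lt_mul_of_pos_left hD hγ
          have h2 : ε₁ * M < ε₁ * (M + 1) := by
            apply mul_lt_mul_of_pos_left (by linarith) hε₁pos
          linarith
      _ = ε / 2 + ε / 2 := by
          rw [hε₁def]
          field_simp
      _ = ε := by ring
  · -- the bound
    intro t ht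
    calc ‖∫ θ in Set.Icc (-τ) (0:ℝ), Ck (s + t) θ (v (t + θ))‖
        ≤ ∫ θ in Set.Icc (-τ) (0:ℝ), ‖Ck (s + t) θ (v (t + θ))‖ :=
          norm_integral_le_integral_norm _
      _ ≤ ∫ θ in Set.Icc (-τ) (0:ℝ), γ * ‖v (t + θ)‖ := by
          refine integral_mono_of_nonneg (.of_forall fun θ => norm_nonneg _)
            (((hvi.comp_add_left t).norm.const_mul γ).restrict) ?_
          filter_upwards [hbdd (s + t) (hst t ht)] with θ hθ
          exact ((Ck (s + t) θ).le_opNorm _).trans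
            (mul_le_mul_of_nonneg_right hθ (norm_nonneg _))
      _ = γ * ∫ θ in Set.Icc (-τ) (0:ℝ), ‖v (t + θ)‖ := integral_const_mul _ _
      _ ≤ γ * ∫ θ, ‖v (t + θ)‖ := by
          apply mul_le_mul_of_nonneg_left _ hγ.le
          exact setIntegral_le_integral (hvi.comp_add_left t).norm
            (.of_forall fun θ => norm_nonneg _)
      _ = γ * ∫ σ, ‖v σ‖ := by
          congr 1
          exact integral_add_left_eq_self (fun σ => ‖v σ‖) t
      _ = γ * ∫ σ in Set.Icc (-τ) h, ‖u σ‖ := by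
          congr 1
          rw [← integral_indicator measurableSet_Icc]
          congr 1
          ext σ
          rw [hvdef, norm_indicator_eq_indicator_norm]
end
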